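/- Let 0 < c₃ < c₁ < c₂ be constants with 2e^{c₁−c₂} > e^{c₃/2}. There exist a constant c > 0 and n₀ ∈ ℕ such that for all n ≥ n₀ and all points A, B with R − c₂ ≤ r_A ≤ R − c₁, R − c₂ ≤ r_B ≤ R − c₁, and R − c₃ ≤ d(A,B) ≤ R: μ([(B_B(R) \ B_B(R − c₃)) ∩ (B_O(R − c₁) \ B_O(R − c₂))] \ B_A(R)) ≥ c e^{−R/2}. -/

import Mathlib

open Real MeasureTheory Filter

noncomputable def coshDist (p q : ℝ × ℝ) : ℝ :=
  Real.cosh p.1 * Real.cosh q.1 - Real.sinh p.1 * Real.sinh q.1 * Real.cos (p.2 - q.2)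

lemma coshDist_symm (p q : ℝ × ℝ) : coshDist p q = coshDist q p := by
  unfold coshDist
  rw [mul_comm (Real.cosh p.1) (Real.cosh q.1), mul_comm (Real.sinh p.1) (Real.sinh q.1),
    ← Real.cos_neg, neg_sub]

noncomputable def RHG {V : Type} (Rr : ℝ) (x : V → ℝ × ℝ) : SimpleGraph V where
  Adj i j := i ≠ j ∧ coshDist (x i) (x j) ≤ Real.cosh Rr
  symm := by
    constructor
    intro i j h
    exact ⟨h.1.symm, by rw [coshDist_symm]; exact h.2⟩
  loopless := by
    constructor
    intro i h
    exact h.1 rfl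

noncomputable def dens (α Rr : ℝ) (p : ℝ × ℝ) : ℝ :=
  if 0 ≤ p.1 ∧ p.1 < Rr ∧ 0 ≤ p.2 ∧ p.2 < 2 * Real.pi then
    α * Real.sinh (α * p.1) / (2 * Real.pi * (Real.cosh (α * Rr) - 1))
  else 0

noncomputable def hypMeasure (α Rr : ℝ) : Measure (ℝ × ℝ) :=
  volume.withDensity (fun p => ENNReal.ofReal (dens α Rr p))

noncomputable def mes (α Rr : ℝ) (S : Set (ℝ × ℝ)) : ℝ := (hypMeasure α Rr S).toReal

noncomputable def sampleMeasure (α Rr : ℝ) (n : ℕ) : Measure (Fin n → ℝ × ℝ) :=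
  volume.withDensity (fun x => ∏ i, ENNReal.ofReal (dens α Rr (x i)))

noncomputable def Rn (C : ℝ) (n : ℕ) : ℝ := 2 * Real.log n + C

noncomputable def hBall (p : ℝ × ℝ) (ρ : ℝ) : Set (ℝ × ℝ) := {q | coshDist p q ≤ Real.cosh ρ}

noncomputable def origin : ℝ × ℝ := (0, 0)

noncomputable def C0 (α : ℝ) : ℝ := 2 / (1/2 - 3/4 * α + α ^ 2 / 4)

noncomputable def Ri (α Rr : ℝ) (i : ℕ) : ℝ :=
  if i = 0 then Rr / 2 else Rr * Real.exp (-(α ^ i) / 2)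

noncomputable def i0 (α C : ℝ) (n : ℕ) : ℕ :=
  sInf {i : ℕ | α ^ i ≤ 2 * C0 α * Real.log (Rn C n) / Rn C n}

noncomputable def angDist (a b : ℝ) : ℝ := min |a - b| (2 * Real.pi - |a - b|)

def validPoint (Rr : ℝ) (p : ℝ × ℝ) : Prop :=
  0 ≤ p.1 ∧ p.1 < Rr ∧ 0 ≤ p.2 ∧ p.2 < 2 * Real.pi

def extendPt {n : ℕ} (q : ℝ × ℝ) (x : Fin n → ℝ × ℝ) : Option (Fin n) → ℝ × ℝ :=
  fun v => v.elim q x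

open Set Topology

/-!
Put `P` on the far side of `B` from `A`: at radius in `[R - c₁ - η, R - c₁]` and at angle `ψ` past
`B`, hence at angle `φ + ψ` from `A`, where `φ` is the angle between `A` and `B`. Since
`cosh d = cosh (r - r') + sinh r sinh r' (1 - cos Δθ)`, for radii close to `R` two points are within
distance `ρ` essentially iff their angle is below `2 e^{(ρ - r - r') / 2}`. In units of `2 e^{-R/2}`
the three ball conditions on `P` therefore cut out a window of angles `ψ` whose ends depend only on
the depths `R - r_A, R - r_B ∈ [c₁, c₂]`. At `η = 0` the window has positive length because
`e^{c₃/2} < 2 e^{c₁ - c₂}`, and by compactness of the square of depths its length stays above some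
`g > 0` for a small `η > 0`. The polar rectangle of radial width `η` and angular length
`≍ g e^{-R/2}` then has `μ`-measure `≍ e^{-R/2}`.
-/

lemma sinh_le_exp_div_two (x : ℝ) : sinh x ≤ exp x / 2 := by
  rw [sinh_eq]; linarith [exp_pos (-x)]

lemma exp_div_two_le_cosh (x : ℝ) : exp x / 2 ≤ cosh x := by
  rw [cosh_eq]; linarith [exp_pos (-x)]

lemma cosh_le_exp {x : ℝ} (hx : 0 ≤ x) : cosh x ≤ exp x := by
  rw [cosh_eq]; linarith [exp_le_exp.2 (neg_le_self hx)]

lemma one_sub_mul_exp_div_two_le_sinh {x η : ℝ} (h : exp (-(2 * x)) ≤ η) :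
    (1 - η) * exp x / 2 ≤ sinh x := by
  have hx : exp (-x) = exp x * exp (-(2 * x)) := by rw [← exp_add]; ring_nf
  rw [sinh_eq, hx]
  nlinarith [exp_pos x]

lemma one_sub_cos_le_sq_div_two (ψ : ℝ) : 1 - cos ψ ≤ ψ ^ 2 / 2 := by
  linarith [one_sub_sq_div_two_le_cos (x := ψ)]

lemma one_sub_mul_sq_div_two_le_one_sub_cos {ψ η : ℝ} (hψ : ψ ^ 2 ≤ η) (hη : η ≤ 1) :
    (1 - η) * ψ ^ 2 / 2 ≤ 1 - cos ψ := by
  have h := (abs_le.1 (cos_bound ((sq_le_one_iff_abs_le_one ψ).1 (hψ.trans hη)))).2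
  have h4 : |ψ| ^ 4 = (ψ ^ 2) ^ 2 := by rw [← sq_abs ψ]; ring
  rw [h4] at h
  nlinarith [sq_nonneg ψ]

lemma two_div_sq_pi_mul_sq_le_one_sub_cos {ψ : ℝ} (hψ : |ψ| ≤ π) :
    2 / π ^ 2 * ψ ^ 2 ≤ 1 - cos ψ := by
  linarith [cos_le_one_sub_mul_cos_sq hψ]

lemma coshDist_eq (p q : ℝ × ℝ) :
    coshDist p q = cosh (p.1 - q.1) + sinh p.1 * sinh q.1 * (1 - cos (p.2 - q.2)) := by
  rw [coshDist, cosh_sub]; ring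

lemma exp_half_sub_sq_mul_exp (ρ s : ℝ) : exp ((ρ - s) / 2) ^ 2 * exp s = exp ρ := by
  rw [← exp_nat_mul, ← exp_add]; ring_nf

/- For large radii `r, r'`, points at angle `ψ` lie within distance `ρ` roughly iff
`ψ ≤ 2 * exp ((ρ - (r + r')) / 2)`; `η` measures the relative slack. -/
section CoshDistBounds

variable {p q : ℝ × ℝ} {ψ η ρ : ℝ}

lemma coshDist_le (hq : 0 ≤ q.1) (hcos : cos (p.2 - q.2) = cos ψ) :
    coshDist p q ≤ cosh (p.1 - q.1) + exp (p.1 + q.1) * ψ ^ 2 / 8 := by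
  have hs : sinh p.1 * sinh q.1 ≤ exp p.1 / 2 * (exp q.1 / 2) :=
    mul_le_mul (sinh_le_exp_div_two _) (sinh_le_exp_div_two _) (sinh_nonneg_iff.2 hq)
      (by positivity)
  have h := mul_le_mul hs (one_sub_cos_le_sq_div_two ψ) (by linarith [cos_le_one ψ])
    (by positivity)
  rw [coshDist_eq, hcos, exp_add]
  linarith

lemma coshDist_le_cosh (hq : 0 ≤ q.1) (hcos : cos (p.2 - q.2) = cos ψ) (hη : 0 ≤ η)
    (hη1 : η ≤ 1) (hd : 2 * cosh (p.1 - q.1) ≤ η * exp ρ) (hψ0 : 0 ≤ ψ)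
    (hψ : ψ ≤ 2 * (1 - η) * exp ((ρ - (p.1 + q.1)) / 2)) : coshDist p q ≤ cosh ρ := by
  have hsq : exp (p.1 + q.1) * ψ ^ 2 ≤ 4 * (1 - η) ^ 2 * exp ρ := by
    calc exp (p.1 + q.1) * ψ ^ 2
        ≤ exp (p.1 + q.1) * (2 * (1 - η) * exp ((ρ - (p.1 + q.1)) / 2)) ^ 2 := by gcongr
      _ = 4 * (1 - η) ^ 2 * exp ρ := by rw [← exp_half_sub_sq_mul_exp ρ (p.1 + q.1)]; ring
  have hη2 : (1 - η) ^ 2 * exp ρ ≤ (1 - η) * exp ρ :=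
    mul_le_mul_of_nonneg_right (by nlinarith) (exp_pos ρ).le
  linarith [coshDist_le hq hcos, exp_div_two_le_cosh ρ]

lemma le_angle_of_cosh_le_coshDist (hq : 0 ≤ q.1) (hcos : cos (p.2 - q.2) = cos ψ) (hη : 0 ≤ η)
    (hη1 : η ≤ 1) (hd : 2 * cosh (p.1 - q.1) ≤ η * exp ρ) (hψ0 : 0 ≤ ψ)
    (h : cosh ρ ≤ coshDist p q) : 2 * (1 - η) * exp ((ρ - (p.1 + q.1)) / 2) ≤ ψ := by
  set E := exp ((ρ - (p.1 + q.1)) / 2)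
  have h4 : exp (p.1 + q.1) * (4 * (1 - η) * E ^ 2) ≤ exp (p.1 + q.1) * ψ ^ 2 := by
    have hE : exp (p.1 + q.1) * (4 * (1 - η) * E ^ 2) = 4 * (1 - η) * exp ρ := by
      rw [← exp_half_sub_sq_mul_exp ρ (p.1 + q.1)]; ring
    linarith [coshDist_le hq hcos, exp_div_two_le_cosh ρ]
  have h5 := le_of_mul_le_mul_left h4 (exp_pos _)
  rw [← pow_le_pow_iff_left₀ (by have := exp_pos ((ρ - (p.1 + q.1)) / 2); nlinarith) hψ0
    two_ne_zero]
  nlinarith [sq_nonneg E]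

lemma cosh_lt_coshDist (hcos : cos (p.2 - q.2) = cos ψ) (hη : η ≤ 1)
    (hp : exp (-(2 * p.1)) ≤ η) (hq : exp (-(2 * q.1)) ≤ η) (hψ : ψ ^ 2 ≤ η) (hρ : 0 ≤ ρ)
    (h : 2 * exp ((ρ - (p.1 + q.1)) / 2) ≤ (1 - η) ^ 2 * ψ) : cosh ρ < coshDist p q := by
  have hη0 : 0 ≤ η := (exp_pos _).le.trans hp
  have h4 : 4 * exp ρ ≤ (1 - η) ^ 3 * exp (p.1 + q.1) * ψ ^ 2 := by
    have hsq := pow_le_pow_left₀ (by positivity) h 2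
    have hE := exp_half_sub_sq_mul_exp ρ (p.1 + q.1)
    have hη3 : (1 - η) ^ 4 * (exp (p.1 + q.1) * ψ ^ 2)
        ≤ (1 - η) ^ 3 * (exp (p.1 + q.1) * ψ ^ 2) :=
      mul_le_mul_of_nonneg_right (pow_le_pow_of_le_one (by linarith) (by linarith) (by norm_num))
        (by positivity)
    nlinarith [exp_pos (p.1 + q.1)]
  have hsp := one_sub_mul_exp_div_two_le_sinh hp
  have hsq := one_sub_mul_exp_div_two_le_sinh hq
  have hp0 : 0 ≤ (1 - η) * exp p.1 / 2 := by nlinarith [exp_pos p.1]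
  have hq0 : 0 ≤ (1 - η) * exp q.1 / 2 := by nlinarith [exp_pos q.1]
  have hs := mul_le_mul hsp hsq hq0 (hp0.trans hsp)
  have hprod := mul_le_mul hs (one_sub_mul_sq_div_two_le_one_sub_cos hψ hη)
    (by nlinarith [sq_nonneg ψ]) ((mul_nonneg hp0 hq0).trans hs)
  have hprod_eq : (1 - η) * exp p.1 / 2 * ((1 - η) * exp q.1 / 2) * ((1 - η) * ψ ^ 2 / 2)
      = (1 - η) ^ 3 * exp (p.1 + q.1) * ψ ^ 2 / 8 := by
    rw [exp_add]; ring
  have hcosh : cosh ρ < exp ρ / 2 + 1 := by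
    rw [cosh_eq]; linarith [exp_le_one_iff.2 (neg_nonpos.2 hρ)]
  rw [coshDist_eq, hcos]
  linarith [one_le_cosh (p.1 - q.1)]

lemma angle_le_of_coshDist_le_cosh (hcos : cos (p.2 - q.2) = cos ψ) (hψ : |ψ| ≤ π)
    (hp : exp (-(2 * p.1)) ≤ 1 / 2) (hq : exp (-(2 * q.1)) ≤ 1 / 2) (hρ : 0 ≤ ρ)
    (h : coshDist p q ≤ cosh ρ) : ψ ≤ 9 * exp ((ρ - (p.1 + q.1)) / 2) := by
  set E := exp ((ρ - (p.1 + q.1)) / 2)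
  have hsp := one_sub_mul_exp_div_two_le_sinh hp
  have hsq := one_sub_mul_exp_div_two_le_sinh hq
  have hs : exp p.1 / 4 * (exp q.1 / 4) ≤ sinh p.1 * sinh q.1 :=
    mul_le_mul (by linarith) (by linarith) (by positivity) (by linarith [exp_pos p.1])
  have hprod := mul_le_mul hs (two_div_sq_pi_mul_sq_le_one_sub_cos hψ) (by positivity)
    (le_trans (by positivity) hs)
  rw [coshDist_eq, hcos] at h
  have hbound : exp p.1 / 4 * (exp q.1 / 4) * (2 / π ^ 2 * ψ ^ 2) ≤ exp ρ := by
    linarith [one_le_cosh (p.1 - q.1), cosh_le_exp hρ]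
  have hsq : exp (p.1 + q.1) * ψ ^ 2 ≤ exp (p.1 + q.1) * (9 * E) ^ 2 := by
    have hprod_eq : exp p.1 / 4 * (exp q.1 / 4) * (2 / π ^ 2 * ψ ^ 2) * (8 * π ^ 2)
        = exp (p.1 + q.1) * ψ ^ 2 := by
      rw [exp_add]; field_simp; ring
    have hE : exp (p.1 + q.1) * (9 * E) ^ 2 = 81 * exp ρ := by
      rw [← exp_half_sub_sq_mul_exp ρ (p.1 + q.1)]; ring
    have h81 : 8 * π ^ 2 ≤ 81 := by nlinarith [pi_lt_d2, pi_pos]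
    rw [← hprod_eq, hE]
    nlinarith [mul_le_mul_of_nonneg_right hbound (by positivity : (0 : ℝ) ≤ 8 * π ^ 2),
      exp_pos ρ]
  exact (abs_le_of_sq_le_sq' (le_of_mul_le_mul_left hsq (exp_pos _)) (by positivity)).2

end CoshDistBounds

lemma cos_mul_of_eq_one_or_eq_neg_one {σ : ℝ} (hσ : σ = 1 ∨ σ = -1) (ψ : ℝ) :
    cos (σ * ψ) = cos ψ := by
  rcases hσ with rfl | rfl <;> simp

lemma exists_cos_add_mul_eq_cos_add (g : ℝ) :
    ∃ φ ∈ Icc 0 π, ∃ σ : ℝ, (σ = 1 ∨ σ = -1) ∧ ∀ ψ, cos (g + σ * ψ) = cos (φ + ψ) := by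
  set g' := toIocMod two_pi_pos (-π) g
  obtain ⟨hlo, hhi⟩ : g' ∈ Ioc (-π) (-π + 2 * π) := toIocMod_mem_Ioc _ _ _
  have hg : ∀ ψ, cos (g + ψ) = cos (g' + ψ) := fun ψ => by
    rw [← toIocMod_add_toIocDiv_zsmul two_pi_pos (-π) g, zsmul_eq_mul, add_right_comm,
      cos_add_int_mul_two_pi]
  rcases le_total 0 g' with h | h
  · exact ⟨g', ⟨h, by linarith⟩, 1, Or.inl rfl, fun ψ => by rw [hg, one_mul]⟩
  · refine ⟨-g', ⟨by linarith, by linarith⟩, -1, Or.inr rfl, fun ψ => ?_⟩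
    rw [hg, ← cos_neg]
    ring_nf

lemma exists_Icc_subset_add_zmultiples (u : ℝ) {w : ℝ} (hw : w < 4 * π) :
    ∃ t, 0 ≤ t ∧ t + w / 2 < 2 * π ∧
      ∀ θ ∈ Icc t (t + w / 2), ∃ k : ℤ, θ + k * (2 * π) ∈ Icc u (u + w) := by
  set u' := toIcoMod two_pi_pos 0 u
  obtain ⟨hlo, hhi⟩ : u' ∈ Ico 0 (0 + 2 * π) := toIcoMod_mem_Ico _ _ _
  obtain ⟨m, hm⟩ : ∃ m : ℤ, u = u' + m * (2 * π) :=
    ⟨toIcoDiv two_pi_pos 0 u, by rw [← zsmul_eq_mul, toIcoMod_add_toIcoDiv_zsmul]⟩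
  by_cases hcase : u' + w / 2 < 2 * π
  · refine ⟨u', hlo, hcase, fun θ ⟨h₁, h₂⟩ => ⟨m, ?_, ?_⟩⟩ <;> linarith
  · refine ⟨0, le_rfl, by linarith, fun θ ⟨h₁, h₂⟩ => ⟨m + 1, ?_, ?_⟩⟩ <;> push_cast <;> linarith

lemma exists_Icc_subset_mul_add_zmultiples (a : ℝ) {σ ψ₁ ψ₂ : ℝ} (hσ : σ = 1 ∨ σ = -1)
    (hψ : ψ₂ - ψ₁ < 4 * π) :
    ∃ t, 0 ≤ t ∧ t + (ψ₂ - ψ₁) / 2 < 2 * π ∧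
      ∀ θ ∈ Icc t (t + (ψ₂ - ψ₁) / 2), ∃ ψ ∈ Icc ψ₁ ψ₂, ∃ k : ℤ, θ = a + σ * ψ + k * (2 * π) := by
  rcases hσ with rfl | rfl
  · obtain ⟨t, ht0, ht, hθ⟩ := exists_Icc_subset_add_zmultiples (a + ψ₁) hψ
    refine ⟨t, ht0, ht, fun θ hθt => ?_⟩
    obtain ⟨k, h₁, h₂⟩ := hθ θ hθt
    exact ⟨θ + k * (2 * π) - a, ⟨by linarith, by linarith⟩, -k, by push_cast; ring⟩
  · obtain ⟨t, ht0, ht, hθ⟩ := exists_Icc_subset_add_zmultiples (a - ψ₂) hψ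
    refine ⟨t, ht0, ht, fun θ hθt => ?_⟩
    obtain ⟨k, h₁, h₂⟩ := hθ θ hθt
    exact ⟨a - (θ + k * (2 * π)), ⟨by linarith, by linarith⟩, -k, by push_cast; ring⟩

lemma lt_add_mul_of_sq_lt {a b t : ℝ} (ha : 0 < a) (hb : 0 < b) (ht : 0 ≤ t)
    (h : b ^ 2 < 2 * t * a ^ 2) : b < a + t * b := by
  by_contra! hle
  have hat : a ≤ (1 - t) * b := by linarith
  have ht1 : t ≤ 1 := by nlinarith
  have hcubic : 0 ≤ (t - 1 / 3) ^ 2 * (4 / 3 - t) := mul_nonneg (sq_nonneg _) (by linarith)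
  nlinarith [mul_le_mul hat hat ha.le (by nlinarith), mul_nonneg ht (sq_nonneg b)]

section Window

variable (c₁ c₃ : ℝ)

/- Angles are in units of `2 * exp (-R / 2)`, and `u`, `v` are the depths `R - A.1`, `R - B.1`.
A point of depth in `[c₁, c₁ + η]` at angle `ψ` past `B` (away from `A`) lies in `hBall B R` if
`ψ ≤ windowUpper c₁ η v`, and outside `hBall B (R - c₃)` and `hBall A R` if
`windowLower c₁ c₃ η u v ≤ ψ`. -/
noncomputable def windowUpper (η v : ℝ) : ℝ := (1 - η) * exp ((v + c₁) / 2)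

noncomputable def windowLower (η u v : ℝ) : ℝ :=
  max (exp ((v + c₁ + η - c₃) / 2) / (1 - η) ^ 2)
    (exp ((u + c₁ + η) / 2) / (1 - η) ^ 2 - (1 - η) * exp ((u + v - c₃) / 2))

variable {c₁ c₃}

lemma windowLower_nonneg (η u v : ℝ) : 0 ≤ windowLower c₁ c₃ η u v :=
  (by positivity : (0 : ℝ) ≤ exp _ / (1 - η) ^ 2).trans (le_max_left _ _)

lemma windowUpper_le_exp {c₂ η v : ℝ} (hη : 0 ≤ η) (hv : v ≤ c₂) (hc : c₁ ≤ c₂) :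
    windowUpper c₁ η v ≤ exp c₂ :=
  calc windowUpper c₁ η v ≤ 1 * exp c₂ :=
        mul_le_mul (by linarith) (exp_le_exp.2 (by linarith)) (exp_pos _).le zero_le_one
    _ = exp c₂ := one_mul _

lemma windowLower_zero_lt_windowUpper_zero {c₂ u v : ℝ} (hc₃ : 0 < c₃)
    (hcs : exp (c₃ / 2) < 2 * exp (c₁ - c₂)) (hu : u ≤ c₂) (hv : c₁ ≤ v) :
    windowLower c₁ c₃ 0 u v < windowUpper c₁ 0 v := by
  simp only [windowLower, windowUpper, sub_zero, add_zero, one_pow, div_one, one_mul]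
  refine max_lt (exp_lt_exp.2 (by linarith)) ?_
  set X := exp (u / 2)
  set Y := exp (v / 2)
  set e₁ := exp (c₁ / 2)
  set e₂ := exp (c₂ / 2)
  set t := exp (-(c₃ / 2))
  have hsplit : ∀ a b, exp ((a + b) / 2) = exp (a / 2) * exp (b / 2) := fun a b => by
    rw [← exp_add]; ring_nf
  have hsub : exp ((u + v - c₃) / 2) = X * Y * t := by
    rw [← exp_add, ← exp_add]; ring_nf
  have hX : X ≤ e₂ := exp_le_exp.2 (by linarith)
  have hY : e₁ ≤ Y := exp_le_exp.2 (by linarith)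
  have ht : t < 1 := exp_lt_one_iff.2 (by linarith)
  have hgap : e₂ < e₁ + t * e₂ := by
    refine lt_add_mul_of_sq_lt (exp_pos _) (exp_pos _) (exp_pos _).le ?_
    rw [← exp_nat_mul, ← exp_nat_mul, Nat.cast_ofNat, mul_div_cancel₀ _ two_ne_zero,
      mul_div_cancel₀ _ two_ne_zero]
    calc exp c₂ = exp (c₃ / 2) * exp (c₂ - c₃ / 2) := by rw [← exp_add]; ring_nf
      _ < 2 * exp (c₁ - c₂) * exp (c₂ - c₃ / 2) := mul_lt_mul_of_pos_right hcs (exp_pos _)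
      _ = 2 * t * exp c₁ := by rw [mul_assoc, mul_assoc, ← exp_add, ← exp_add]; ring_nf
  rw [hsplit, hsplit, hsub]
  -- the gap is bilinear in `(X, Y)` and smallest at `X = e₂`, `Y = e₁`, where it is
  -- `e₁ (e₁ + t e₂ - e₂)`
  nlinarith [mul_nonneg (sub_nonneg.2 hY) (add_nonneg (exp_pos (c₁ / 2)).le
    (mul_nonneg (exp_pos (-(c₃ / 2))).le (exp_pos (u / 2)).le)),
    mul_nonneg (mul_nonneg (sub_nonneg.2 hX) (exp_pos (c₁ / 2)).le) (sub_nonneg.2 ht.le),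
    exp_pos (c₁ / 2)]

lemma exists_pos_eventually_le_window_sub {c₂ : ℝ} (hc₃ : 0 < c₃) (h12 : c₁ ≤ c₂)
    (hcs : exp (c₃ / 2) < 2 * exp (c₁ - c₂)) :
    ∃ g > 0, ∀ᶠ η in 𝓝 0, ∀ z ∈ Icc c₁ c₂ ×ˢ Icc c₁ c₂,
      g ≤ windowUpper c₁ η z.2 - windowLower c₁ c₃ η z.1 z.2 := by
  set F : ℝ × (ℝ × ℝ) → ℝ := fun w => windowUpper c₁ w.1 w.2.2 - windowLower c₁ c₃ w.1 w.2.1 w.2.2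
  have hF : ∀ z, ContinuousAt F (0, z) := fun z => by
    simp only [F, windowUpper, windowLower]
    fun_prop (disch := norm_num)
  have hF0 : Continuous fun z => F (0, z) :=
    continuous_iff_continuousAt.2 fun z => (hF z).comp (Continuous.continuousAt (by fun_prop))
  have hK : IsCompact (Icc c₁ c₂ ×ˢ Icc c₁ c₂) := isCompact_Icc.prod isCompact_Icc
  obtain ⟨m, ⟨⟨-, hm₁⟩, ⟨hm₂, -⟩⟩, hmin⟩ :=
    hK.exists_isMinOn ⟨(c₁, c₁), ⟨le_rfl, h12⟩, ⟨le_rfl, h12⟩⟩ hF0.continuousOn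
  have hpos : 0 < F (0, m) := sub_pos.2 (windowLower_zero_lt_windowUpper_zero hc₃ hcs hm₁ hm₂)
  refine ⟨F (0, m) / 2, half_pos hpos, hK.eventually_forall_of_forall_eventually fun z hz => ?_⟩
  filter_upwards [continuousAt_const.eventually_lt (hF z)
    (lt_of_lt_of_le (half_lt_self hpos) (hmin hz))] with w hw using hw.le

lemma exists_window_slack {c₂ : ℝ} (hc₃ : 0 < c₃) (h12 : c₁ < c₂)
    (hcs : exp (c₃ / 2) < 2 * exp (c₁ - c₂)) :
    ∃ η > 0, η ≤ 1 / 2 ∧ η < c₂ - c₁ ∧ ∃ g > 0, ∀ u ∈ Icc c₁ c₂, ∀ v ∈ Icc c₁ c₂,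
      g ≤ windowUpper c₁ η v - windowLower c₁ c₃ η u v := by
  obtain ⟨g, hg, hev⟩ := exists_pos_eventually_le_window_sub hc₃ h12.le hcs
  have hsmall : ∀ᶠ η in 𝓝 (0 : ℝ), η < min (1 / 2) (c₂ - c₁) :=
    eventually_lt_nhds (lt_min (by norm_num) (sub_pos.2 h12))
  obtain ⟨η, ⟨hηg, hη⟩, hη0⟩ :=
    ((hev.and hsmall).filter_mono nhdsWithin_le_nhds |>.and self_mem_nhdsWithin).exists
      (f := 𝓝[>] (0 : ℝ))
  exact ⟨η, hη0, (hη.trans_le (min_le_left _ _)).le, hη.trans_le (min_le_right _ _), g, hg,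
    fun u hu v hv => hηg (u, v) ⟨hu, hv⟩⟩

end Window

structure IsLargeRadius (α η c₁ c₂ c₃ R : ℝ) : Prop where
  one_le_mul : 1 ≤ α * (R - c₂)
  exp_le : exp (-(2 * (R - c₂))) ≤ η
  two_mul_cosh_le : 2 * cosh (c₂ - c₁) ≤ η * exp (R - c₃)
  angle_le : 11 * exp (c₂ - R / 2) ≤ η

namespace IsLargeRadius

variable {α η c₁ c₂ c₃ R : ℝ}

lemma sub_pos (hR : IsLargeRadius α η c₁ c₂ c₃ R) (hα : 0 < α) : 0 < R - c₂ :=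
  pos_of_mul_pos_right (one_pos.trans_le hR.one_le_mul) hα.le

lemma pos (hR : IsLargeRadius α η c₁ c₂ c₃ R) : 0 < η :=
  (exp_pos _).trans_le hR.exp_le

lemma exp_neg_two_mul_le (hR : IsLargeRadius α η c₁ c₂ c₃ R) {x : ℝ}
    (hx : R - c₂ ≤ x) : exp (-(2 * x)) ≤ η :=
  (exp_le_exp.2 (by linarith)).trans hR.exp_le

end IsLargeRadius

lemma eventually_isLargeRadius {α η : ℝ} (hα : 0 < α) (hη : 0 < η) (c₁ c₂ c₃ : ℝ) :
    ∀ᶠ R in atTop, IsLargeRadius α η c₁ c₂ c₃ R := by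
  filter_upwards [eventually_ge_atTop (c₂ + 1 / α), eventually_ge_atTop (c₂ - log η / 2),
    eventually_ge_atTop (c₃ + log (2 * cosh (c₂ - c₁) / η)),
    eventually_ge_atTop (2 * (c₂ - log (η / 11)))] with R h₁ h₂ h₃ h₄
  refine ⟨(div_le_iff₀' hα).1 (by linarith), ?_, ?_, ?_⟩
  · calc exp (-(2 * (R - c₂))) ≤ exp (log η) := exp_le_exp.2 (by linarith)
      _ = η := exp_log hη
  · rw [← div_le_iff₀' hη, ← exp_log (by positivity : 0 < 2 * cosh (c₂ - c₁) / η)]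
    exact exp_le_exp.2 (by linarith)
  · rw [← le_div_iff₀' (by norm_num), ← exp_log (by positivity : 0 < η / 11)]
    exact exp_le_exp.2 (by linarith)

lemma tendsto_Rn (C : ℝ) : Tendsto (Rn C) atTop atTop :=
  tendsto_atTop_add_const_right _ C
    ((tendsto_log_atTop.comp tendsto_natCast_atTop_atTop).const_mul_atTop two_pos)

lemma exp_neg_two_mul_le_half {x : ℝ} (hx : 1 ≤ x) : exp (-(2 * x)) ≤ 1 / 2 := by
  rw [exp_neg, ← one_div, div_le_div_iff₀ (exp_pos _) two_pos]
  linarith [add_one_le_exp (2 * x)]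

lemma le_dens {α R : ℝ} {p : ℝ × ℝ} (hα : 0 < α) (hp : validPoint R p) (h1 : 1 ≤ α * p.1) :
    α * exp (-(α * (R - p.1))) / (8 * π) ≤ dens α R p := by
  have hp' : 0 ≤ p.1 ∧ p.1 < R ∧ 0 ≤ p.2 ∧ p.2 < 2 * π := hp
  have hαR : α * p.1 ≤ α * R := mul_le_mul_of_nonneg_left hp'.2.1.le hα.le
  have hs : exp (α * p.1) / 4 ≤ sinh (α * p.1) := by
    linarith [one_sub_mul_exp_div_two_le_sinh (exp_neg_two_mul_le_half h1)]
  have hc : 0 < cosh (α * R) - 1 := sub_pos.2 (one_lt_cosh.2 (by linarith))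
  have hc' : cosh (α * R) - 1 ≤ exp (α * R) := by
    linarith [cosh_le_exp (show 0 ≤ α * R by linarith)]
  have hE : exp (-(α * (R - p.1))) * exp (α * R) = exp (α * p.1) := by
    rw [← exp_add]; ring_nf
  rw [dens, if_pos hp', div_le_div_iff₀ (by positivity) (by positivity)]
  calc α * exp (-(α * (R - p.1))) * (2 * π * (cosh (α * R) - 1))
      ≤ α * exp (-(α * (R - p.1))) * (2 * π * exp (α * R)) := by gcongr
    _ = α * (exp (α * p.1) / 4) * (8 * π) := by rw [← hE]; ring
    _ ≤ α * sinh (α * p.1) * (8 * π) := by gcongr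

lemma hypMeasure_univ_lt_top {α R : ℝ} (hα : 0 < α) (hR : 0 < R) : hypMeasure α R univ < ⊤ := by
  set D := α * sinh (α * R) / (2 * π * (cosh (α * R) - 1))
  set box : Set (ℝ × ℝ) := Icc 0 R ×ˢ Icc 0 (2 * π)
  have hc : 0 < cosh (α * R) - 1 := sub_pos.2 (one_lt_cosh.2 (by positivity))
  have hle : ∀ p, ENNReal.ofReal (dens α R p) ≤ box.indicator (fun _ => ENNReal.ofReal D) p := by
    intro p
    rw [dens]
    split_ifs with h
    · rw [indicator_of_mem (show p ∈ box from ⟨⟨h.1, h.2.1.le⟩, h.2.2.1, h.2.2.2.le⟩)]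
      refine ENNReal.ofReal_le_ofReal (div_le_div_of_nonneg_right ?_ (by positivity))
      exact mul_le_mul_of_nonneg_left (sinh_le_sinh.2 (by nlinarith)) hα.le
    · simp
  calc hypMeasure α R univ = ∫⁻ p, ENNReal.ofReal (dens α R p) := by
        rw [hypMeasure, withDensity_apply _ MeasurableSet.univ, Measure.restrict_univ]
    _ ≤ ∫⁻ p, box.indicator (fun _ => ENNReal.ofReal D) p := lintegral_mono hle
    _ = ENNReal.ofReal D * volume box := by
        rw [lintegral_indicator (measurableSet_Icc.prod measurableSet_Icc), setLIntegral_const]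
    _ < ⊤ := ENNReal.mul_lt_top ENNReal.ofReal_lt_top
        (isCompact_Icc.prod isCompact_Icc).measure_lt_top

lemma hypMeasure_ne_top {α R : ℝ} (hα : 0 < α) (hR : 0 < R) (S : Set (ℝ × ℝ)) :
    hypMeasure α R S ≠ ⊤ :=
  ((measure_mono (subset_univ S)).trans_lt (hypMeasure_univ_lt_top hα hR)).ne

lemma mes_mono {α R : ℝ} (hα : 0 < α) (hR : 0 < R) {S T : Set (ℝ × ℝ)} (h : S ⊆ T) :
    mes α R S ≤ mes α R T :=
  ENNReal.toReal_mono (hypMeasure_ne_top hα hR T) (measure_mono h)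

lemma le_mes_Icc_prod_Icc {α R r₁ r₂ t₁ t₂ : ℝ} (hα : 0 < α) (h1 : 1 ≤ α * r₁) (hr : r₁ ≤ r₂)
    (hr₂ : r₂ < R) (ht₁ : 0 ≤ t₁) (ht₂ : t₂ < 2 * π) :
    α * exp (-(α * (R - r₁))) / (8 * π) * ((r₂ - r₁) * (t₂ - t₁)) ≤
      mes α R (Icc r₁ r₂ ×ˢ Icc t₁ t₂) := by
  set d := α * exp (-(α * (R - r₁))) / (8 * π)
  have hR : 0 < R := by nlinarith
  have hK : MeasurableSet (Icc r₁ r₂ ×ˢ Icc t₁ t₂) := measurableSet_Icc.prod measurableSet_Icc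
  have hd : ∀ p ∈ Icc r₁ r₂ ×ˢ Icc t₁ t₂, d ≤ dens α R p := by
    rintro p ⟨⟨hp₁, hp₂⟩, hp₃, hp₄⟩
    refine le_trans ?_ (le_dens hα ⟨by nlinarith, by linarith, by linarith, by linarith⟩
      (h1.trans (by gcongr)))
    exact div_le_div_of_nonneg_right
      (mul_le_mul_of_nonneg_left (exp_le_exp.2 (by nlinarith)) hα.le) (by positivity)
  rw [mes, ← ENNReal.ofReal_le_iff_le_toReal (hypMeasure_ne_top hα hR _), ENNReal.ofReal_mul
    (by positivity), ENNReal.ofReal_mul (by linarith), ← Real.volume_Icc, ← Real.volume_Icc,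
    ← Measure.prod_prod, ← Measure.volume_eq_prod, ← setLIntegral_const, hypMeasure,
    withDensity_apply _ hK]
  exact setLIntegral_mono' hK fun p hp => ENNReal.ofReal_le_ofReal (hd p hp)

lemma mem_hBall_origin_diff {p : ℝ × ℝ} {r₁ r₂ : ℝ} (h₀ : 0 ≤ r₁) (h₁ : r₁ < p.1)
    (h₂ : p.1 ≤ r₂) : p ∈ hBall origin r₂ \ hBall origin r₁ := by
  have h : coshDist origin p = cosh p.1 := by simp [coshDist, origin]
  have hp : 0 ≤ p.1 := h₀.trans h₁.le
  refine ⟨show coshDist origin p ≤ cosh r₂ from ?_, fun h' => ?_⟩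
  · rw [h, cosh_le_cosh, abs_of_nonneg hp, abs_of_nonneg (hp.trans h₂)]
    exact h₂
  · have hle : coshDist origin p ≤ cosh r₁ := h'
    rw [h, cosh_le_cosh, abs_of_nonneg hp, abs_of_nonneg h₀] at hle
    linarith

lemma cosh_sub_le_of_mem_Icc {R c₁ c₂ x y : ℝ} (hx : x ∈ Icc (R - c₂) (R - c₁))
    (hy : y ∈ Icc (R - c₂) (R - c₁)) : cosh (x - y) ≤ cosh (c₂ - c₁) := by
  rw [cosh_le_cosh, abs_of_nonneg (show 0 ≤ c₂ - c₁ by linarith [hx.1, hx.2]), abs_le]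
  constructor <;> linarith [hx.1, hx.2, hy.1, hy.2]

lemma two_mul_exp_le_one_sub_sq_mul_of_le {R z w η ψ : ℝ} (hη : η < 1) (hw : w ≤ z - R)
    (h : 2 * exp (-R / 2) * (exp (z / 2) / (1 - η) ^ 2) ≤ ψ) :
    2 * exp (w / 2) ≤ (1 - η) ^ 2 * ψ := by
  have hη2 : 0 < (1 - η) ^ 2 := pow_pos (sub_pos.2 hη) 2
  have hη1 : 1 - η ≠ 0 := (sub_pos.2 hη).ne'
  calc 2 * exp (w / 2) ≤ 2 * (exp (-R / 2) * exp (z / 2)) := by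
        rw [← exp_add]; gcongr; linarith
    _ = (1 - η) ^ 2 * (2 * exp (-R / 2) * (exp (z / 2) / (1 - η) ^ 2)) := by field_simp
    _ ≤ (1 - η) ^ 2 * ψ := by gcongr

def avoidRegion (A B : ℝ × ℝ) (R c₁ c₂ c₃ : ℝ) : Set (ℝ × ℝ) :=
  ((hBall B R \ hBall B (R - c₃)) ∩ (hBall origin (R - c₁) \ hBall origin (R - c₂))) \ hBall A R

section AvoidRegion

variable {α η c₁ c₂ c₃ R : ℝ} {A B P : ℝ × ℝ} {φ ψ : ℝ}

lemma mem_hBall_of_le_windowUpper (hα : 0 < α) (hR : IsLargeRadius α η c₁ c₂ c₃ R)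
    (hc₃ : 0 ≤ c₃) (hη : η ≤ 1) (hB : B.1 ∈ Icc (R - c₂) (R - c₁))
    (hP : P.1 ∈ Icc (R - c₂) (R - c₁)) (hcos : cos (B.2 - P.2) = cos ψ) (hψ₀ : 0 ≤ ψ)
    (hψ : ψ ≤ 2 * exp (-R / 2) * windowUpper c₁ η (R - B.1)) : P ∈ hBall B R := by
  refine coshDist_le_cosh (by linarith [hP.1, hR.sub_pos hα]) hcos hR.pos.le hη ?_ hψ₀
    (hψ.trans ?_)
  · have := mul_le_mul_of_nonneg_left (exp_le_exp.2 (sub_le_self R hc₃)) hR.pos.le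
    linarith [cosh_sub_le_of_mem_Icc hB hP, hR.two_mul_cosh_le]
  · have h : exp (-R / 2) * exp ((R - B.1 + c₁) / 2) ≤ exp ((R - (B.1 + P.1)) / 2) := by
      rw [← exp_add]; exact exp_le_exp.2 (by linarith [hP.2])
    calc 2 * exp (-R / 2) * windowUpper c₁ η (R - B.1)
        = 2 * (1 - η) * (exp (-R / 2) * exp ((R - B.1 + c₁) / 2)) := by
          rw [windowUpper]; ring
      _ ≤ _ := mul_le_mul_of_nonneg_left h (by linarith)

lemma notMem_hBall_of_windowLower_le (hR : IsLargeRadius α η c₁ c₂ c₃ R)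
    (hρ : 0 ≤ R - c₃) (hη : η < 1) (hB : B.1 ∈ Icc (R - c₂) (R - c₁))
    (hP : P.1 ∈ Icc (R - (c₁ + η)) (R - c₁)) (hPc : R - c₂ ≤ P.1)
    (hcos : cos (B.2 - P.2) = cos ψ) (hψ₀ : 0 ≤ ψ) (hψη : ψ ≤ η) {u : ℝ}
    (hψ : 2 * exp (-R / 2) * windowLower c₁ c₃ η u (R - B.1) ≤ ψ) : P ∉ hBall B (R - c₃) := by
  refine fun h => (cosh_lt_coshDist hcos hη.le (hR.exp_neg_two_mul_le hB.1)
    (hR.exp_neg_two_mul_le hPc) (by nlinarith) hρ ?_).not_ge h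
  refine two_mul_exp_le_one_sub_sq_mul_of_le (R := R) (z := R - B.1 + c₁ + η - c₃) hη
    (by linarith [hP.1]) ?_
  exact (mul_le_mul_of_nonneg_left (le_max_left _ _) (by positivity)).trans hψ

lemma notMem_hBall_of_windowLower_le_add (hR : IsLargeRadius α η c₁ c₂ c₃ R) (hR₀ : 0 ≤ R)
    (hη : η < 1) (hA : A.1 ∈ Icc (R - c₂) (R - c₁)) (hP : P.1 ∈ Icc (R - (c₁ + η)) (R - c₁))
    (hPc : R - c₂ ≤ P.1) (hcos : cos (A.2 - P.2) = cos (φ + ψ))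
    (hφ : 2 * (1 - η) * exp ((R - c₃ - (A.1 + B.1)) / 2) ≤ φ)
    (hψ : 2 * exp (-R / 2) * windowLower c₁ c₃ η (R - A.1) (R - B.1) ≤ ψ)
    (hφψ₀ : 0 ≤ φ + ψ) (hφψ : φ + ψ ≤ η) : P ∉ hBall A R := by
  refine fun h => (cosh_lt_coshDist hcos hη.le (hR.exp_neg_two_mul_le hA.1)
    (hR.exp_neg_two_mul_le hPc) (by nlinarith) hR₀ ?_).not_ge h
  refine two_mul_exp_le_one_sub_sq_mul_of_le (R := R) (z := R - A.1 + c₁ + η) hη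
    (by linarith [hP.1]) ?_
  have hψ' := (mul_le_mul_of_nonneg_left (le_max_right _ _) (by positivity)).trans hψ
  have hδ : exp (-R / 2) * exp ((R - A.1 + (R - B.1) - c₃) / 2)
      = exp ((R - c₃ - (A.1 + B.1)) / 2) := by
    rw [← exp_add]; ring_nf
  calc 2 * exp (-R / 2) * (exp ((R - A.1 + c₁ + η) / 2) / (1 - η) ^ 2)
      = 2 * exp (-R / 2) * (exp ((R - A.1 + c₁ + η) / 2) / (1 - η) ^ 2
          - (1 - η) * exp ((R - A.1 + (R - B.1) - c₃) / 2))
        + 2 * (1 - η) * (exp (-R / 2) * exp ((R - A.1 + (R - B.1) - c₃) / 2)) := by ring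
    _ ≤ ψ + φ := by rw [hδ]; exact add_le_add hψ' hφ
    _ = φ + ψ := add_comm ψ φ

lemma exists_separation_angle (hα : 0 < α) (hR : IsLargeRadius α η c₁ c₂ c₃ R) (hR₀ : 0 ≤ R)
    (hη : η ≤ 1 / 2) (hA : A.1 ∈ Icc (R - c₂) (R - c₁)) (hB : B.1 ∈ Icc (R - c₂) (R - c₁))
    (hAB₁ : cosh (R - c₃) ≤ coshDist A B) (hAB₂ : coshDist A B ≤ cosh R) :
    ∃ φ σ : ℝ, (σ = 1 ∨ σ = -1) ∧ (∀ ψ, cos (B.2 - A.2 + σ * ψ) = cos (φ + ψ)) ∧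
      2 * (1 - η) * exp ((R - c₃ - (A.1 + B.1)) / 2) ≤ φ ∧ φ ≤ 9 * exp (c₂ - R / 2) := by
  obtain ⟨φ, ⟨hφ₀, hφπ⟩, σ, hσ, hcos⟩ := exists_cos_add_mul_eq_cos_add (B.2 - A.2)
  have hcosAB : cos (A.2 - B.2) = cos φ := by
    rw [← cos_neg, neg_sub, ← add_zero (B.2 - A.2), ← mul_zero σ, hcos, add_zero]
  have hexp : ∀ x ∈ Icc (R - c₂) (R - c₁), exp (-(2 * x)) ≤ 1 / 2 := fun x hx =>
    (hR.exp_neg_two_mul_le hx.1).trans hη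
  refine ⟨φ, σ, hσ, hcos, le_angle_of_cosh_le_coshDist (by linarith [hB.1, hR.sub_pos hα])
    hcosAB hR.pos.le (by linarith) ?_ hφ₀ hAB₁, ?_⟩
  · linarith [cosh_sub_le_of_mem_Icc hA hB, hR.two_mul_cosh_le]
  · refine (angle_le_of_coshDist_le_cosh hcosAB (by rwa [abs_of_nonneg hφ₀]) (hexp _ hA)
      (hexp _ hB) hR₀ hAB₂).trans ?_
    gcongr
    linarith [hA.1, hB.1]

end AvoidRegion

lemma Icc_prod_Icc_subset_avoidRegion {α η c₁ c₂ c₃ R φ σ ψ₁ ψ₂ t t' : ℝ} {A B : ℝ × ℝ}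
    (hα : 0 < α) (hR : IsLargeRadius α η c₁ c₂ c₃ R) (hc₃ : 0 ≤ c₃) (h31 : c₃ < c₁)
    (hη : η ≤ 1 / 2) (hηc : η < c₂ - c₁) (hA : A.1 ∈ Icc (R - c₂) (R - c₁))
    (hB : B.1 ∈ Icc (R - c₂) (R - c₁)) (hσ : σ = 1 ∨ σ = -1)
    (hcos : ∀ ψ, cos (B.2 - A.2 + σ * ψ) = cos (φ + ψ))
    (hφ : 2 * (1 - η) * exp ((R - c₃ - (A.1 + B.1)) / 2) ≤ φ)
    (hψ₁ : ψ₁ = 2 * exp (-R / 2) * windowLower c₁ c₃ η (R - A.1) (R - B.1))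
    (hψ₂ : ψ₂ = 2 * exp (-R / 2) * windowUpper c₁ η (R - B.1)) (hsmall : φ + ψ₂ ≤ η)
    (hθ : ∀ θ ∈ Icc t t', ∃ ψ ∈ Icc ψ₁ ψ₂, ∃ k : ℤ, θ = B.2 + σ * ψ + k * (2 * π)) :
    Icc (R - (c₁ + η)) (R - c₁) ×ˢ Icc t t' ⊆ avoidRegion A B R c₁ c₂ c₃ := by
  rintro P ⟨hP, hθP⟩
  obtain ⟨ψ, ⟨hψ₁', hψ₂'⟩, k, hk⟩ := hθ P.2 hθP
  have hcosB : cos (B.2 - P.2) = cos ψ := by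
    rw [hk, show B.2 - (B.2 + σ * ψ + k * (2 * π)) = -(σ * ψ) - k * (2 * π) by ring,
      cos_sub_int_mul_two_pi, cos_neg, cos_mul_of_eq_one_or_eq_neg_one hσ]
  have hcosA : cos (A.2 - P.2) = cos (φ + ψ) := by
    rw [hk, show A.2 - (B.2 + σ * ψ + k * (2 * π)) = -(B.2 - A.2 + σ * ψ) - k * (2 * π) by ring,
      cos_sub_int_mul_two_pi, cos_neg, hcos]
  have hR₀ := hR.sub_pos hα
  have hPc : R - c₂ < P.1 := by linarith [hP.1]
  have hψ₀ : 0 ≤ ψ := (hψ₁ ▸ mul_nonneg (by positivity) (windowLower_nonneg _ _ _)).trans hψ₁'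
  have hφ₀ : 0 ≤ φ := (mul_nonneg (by linarith) (exp_pos _).le).trans hφ
  refine ⟨⟨⟨?_, ?_⟩, mem_hBall_origin_diff hR₀.le hPc hP.2⟩, ?_⟩
  · exact mem_hBall_of_le_windowUpper hα hR hc₃ (by linarith) hB ⟨hPc.le, hP.2⟩ hcosB hψ₀
      (hψ₂ ▸ hψ₂')
  · exact notMem_hBall_of_windowLower_le hR (by linarith) (by linarith) hB hP hPc.le hcosB
      hψ₀ (by linarith) (hψ₁ ▸ hψ₁')
  · exact notMem_hBall_of_windowLower_le_add hR (by linarith) (by linarith) hA hP hPc.le hcosA hφ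
      (hψ₁ ▸ hψ₁') (by linarith) (by linarith)

lemma le_mes_avoidRegion {α η c₁ c₂ c₃ R g : ℝ} {A B : ℝ × ℝ} (hα : 0 < α) (hc₃ : 0 ≤ c₃)
    (h31 : c₃ < c₁) (hη : η ≤ 1 / 2) (hηc : η < c₂ - c₁) (hR : IsLargeRadius α η c₁ c₂ c₃ R)
    (hg : ∀ u ∈ Icc c₁ c₂, ∀ v ∈ Icc c₁ c₂, g ≤ windowUpper c₁ η v - windowLower c₁ c₃ η u v)
    (hA : A.1 ∈ Icc (R - c₂) (R - c₁)) (hB : B.1 ∈ Icc (R - c₂) (R - c₁))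
    (hAB₁ : cosh (R - c₃) ≤ coshDist A B) (hAB₂ : coshDist A B ≤ cosh R) :
    α * exp (-(α * (c₁ + η))) / (8 * π) * η * g * exp (-R / 2) ≤
      mes α R (avoidRegion A B R c₁ c₂ c₃) := by
  have hη₀ := hR.pos
  have hR₀ := hR.sub_pos hα
  obtain ⟨φ, σ, hσ, hcos, hφ, hφ'⟩ :=
    exists_separation_angle hα hR (by linarith) hη hA hB hAB₁ hAB₂
  set ψ₁ := 2 * exp (-R / 2) * windowLower c₁ c₃ η (R - A.1) (R - B.1) with hψ₁
  set ψ₂ := 2 * exp (-R / 2) * windowUpper c₁ η (R - B.1) with hψ₂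
  have hgap : 2 * exp (-R / 2) * g ≤ ψ₂ - ψ₁ := by
    rw [← mul_sub]
    exact mul_le_mul_of_nonneg_left (hg _ ⟨by linarith [hA.2], by linarith [hA.1]⟩ _
      ⟨by linarith [hB.2], by linarith [hB.1]⟩) (by positivity)
  have hsmall : φ + ψ₂ ≤ η := by
    have h := mul_le_mul_of_nonneg_left (windowUpper_le_exp (c₁ := c₁) hη₀.le
      (show R - B.1 ≤ c₂ by linarith [hB.1]) (by linarith))
      (by positivity : (0 : ℝ) ≤ 2 * exp (-R / 2))
    have he : 2 * exp (-R / 2) * exp c₂ = 2 * exp (c₂ - R / 2) := by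
      rw [mul_assoc, ← exp_add]; ring_nf
    linarith [hR.angle_le]
  have hφ₀ : 0 ≤ φ := (mul_nonneg (by linarith) (exp_pos _).le).trans hφ
  have hψ₁₀ : 0 ≤ ψ₁ := mul_nonneg (by positivity) (windowLower_nonneg _ _ _)
  obtain ⟨t, ht₀, ht, hθ⟩ := exists_Icc_subset_mul_add_zmultiples B.2 hσ (ψ₁ := ψ₁) (ψ₂ := ψ₂)
    (by linarith [pi_gt_three])
  calc α * exp (-(α * (c₁ + η))) / (8 * π) * η * g * exp (-R / 2)
      = α * exp (-(α * (c₁ + η))) / (8 * π) * (η * (2 * exp (-R / 2) * g / 2)) := by ring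
    _ ≤ α * exp (-(α * (c₁ + η))) / (8 * π) * (η * ((ψ₂ - ψ₁) / 2)) :=
        mul_le_mul_of_nonneg_left (mul_le_mul_of_nonneg_left (by linarith) hη₀.le) (by positivity)
    _ = α * exp (-(α * (R - (R - (c₁ + η))))) / (8 * π) *
          ((R - c₁ - (R - (c₁ + η))) * (t + (ψ₂ - ψ₁) / 2 - t)) := by ring_nf
    _ ≤ mes α R (Icc (R - (c₁ + η)) (R - c₁) ×ˢ Icc t (t + (ψ₂ - ψ₁) / 2)) :=
        le_mes_Icc_prod_Icc hα (by nlinarith [hR.one_le_mul]) (by linarith) (by linarith) ht₀ ht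
    _ ≤ _ := mes_mono hα (by linarith) (Icc_prod_Icc_subset_avoidRegion hα hR hc₃ h31 hη hηc
        hA hB hσ hcos hφ hψ₁ hψ₂ hsmall hθ)

theorem ball_intersection_avoid_general (α C c₁ c₂ c₃ : ℝ) (hα : 1/2 < α)
    (h3 : 0 < c₃) (h31 : c₃ < c₁) (h12 : c₁ < c₂)
    (hcs : Real.exp (c₃ / 2) < 2 * Real.exp (c₁ - c₂)) :
    ∃ c > (0:ℝ), ∃ n₀ : ℕ, ∀ n ≥ n₀, ∀ A B : ℝ × ℝ,
      validPoint (Rn C n) A → validPoint (Rn C n) B →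
      Rn C n - c₂ ≤ A.1 → A.1 ≤ Rn C n - c₁ →
      Rn C n - c₂ ≤ B.1 → B.1 ≤ Rn C n - c₁ →
      Real.cosh (Rn C n - c₃) ≤ coshDist A B → coshDist A B ≤ Real.cosh (Rn C n) →
      c * Real.exp (-(Rn C n) / 2) ≤
        mes α (Rn C n) (((hBall B (Rn C n) \ hBall B (Rn C n - c₃)) ∩
          (hBall origin (Rn C n - c₁) \ hBall origin (Rn C n - c₂))) \ hBall A (Rn C n)) := by
  have hα₀ : 0 < α := by linarith
  obtain ⟨η, hη₀, hη, hηc, g, hg₀, hg⟩ := exists_window_slack h3 h12 hcs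
  obtain ⟨n₀, hn₀⟩ := eventually_atTop.1
    ((tendsto_Rn C).eventually (eventually_isLargeRadius hα₀ hη₀ c₁ c₂ c₃))
  refine ⟨α * exp (-(α * (c₁ + η))) / (8 * π) * η * g, by positivity, n₀,
    fun n hn A B _ _ hA₁ hA₂ hB₁ hB₂ hAB₁ hAB₂ => ?_⟩
  exact le_mes_avoidRegion hα₀ h3.le h31 hη hηc (hn₀ n hn) hg ⟨hA₁, hA₂⟩ ⟨hB₁, hB₂⟩ hAB₁ hAB₂

/-- Lemma 4.2 of the paper: the part of the annulus of `B` inside the band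
that avoids `B_A(R)` has measure at least `c e^{-R/2}`. -/
theorem ball_intersection_avoid (α C c₁ c₂ c₃ : ℝ) (hα : 1/2 < α) (hα' : α < 1)
    (h3 : 0 < c₃) (h31 : c₃ < c₁) (h12 : c₁ < c₂)
    (hcs : Real.exp (c₃ / 2) < 2 * Real.exp (c₁ - c₂)) :
    ∃ c > (0:ℝ), ∃ n₀ : ℕ, ∀ n ≥ n₀, ∀ A B : ℝ × ℝ,
      validPoint (Rn C n) A → validPoint (Rn C n) B →
      Rn C n - c₂ ≤ A.1 → A.1 ≤ Rn C n - c₁ →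
      Rn C n - c₂ ≤ B.1 → B.1 ≤ Rn C n - c₁ →
      Real.cosh (Rn C n - c₃) ≤ coshDist A B → coshDist A B ≤ Real.cosh (Rn C n) →
      c * Real.exp (-(Rn C n) / 2) ≤
        mes α (Rn C n) (((hBall B (Rn C n) \ hBall B (Rn C n - c₃)) ∩
          (hBall origin (Rn C n - c₁) \ hBall origin (Rn C n - c₂))) \ hBall A (Rn C n)) :=
  ball_intersection_avoid_general α C c₁ c₂ c₃ hα h3 h31 h12 hcs
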